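/- For every n ≥ 6, the maximum number of edges of an n-vertex 3-graph that contains two disjoint edges and is free of P, of C, and of P_2 ∪ K_3 equals 2n − 4; that is, ex(n;{P, C, P_2 ∪ K_3}|M) = 2n − 4. -/

import Mathlib

/-!
Common framework: 3-uniform hypergraphs (`3-graphs`) with vertex set a `Finset ℕ`,
copies/embeddings, isomorphism, connectivity, concrete 3-graphs from the paper,
and (higher order) Turán-extremality.
-/

structure ThreeGraph where
  verts : Finset ℕ
  edges : Finset (Finset ℕ)
  sub : ∀ e ∈ edges, e ⊆ verts
  card3 : ∀ e ∈ edges, e.card = 3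

namespace ThreeGraph

/-- The 3-graph on vertex set `V` whose edges are the 3-element subsets of `V`
satisfying the predicate `p`. -/
noncomputable def mk3 (V : Finset ℕ) (p : Finset ℕ → Prop) : ThreeGraph :=
  letI := Classical.decPred p
  { verts := V
    edges := (V.powersetCard 3).filter p
    sub := fun e he => (Finset.mem_powersetCard.mp (Finset.mem_filter.mp he).1).1
    card3 := fun e he => (Finset.mem_powersetCard.mp (Finset.mem_filter.mp he).1).2 }

/-- `H` contains a copy of `F` (i.e. a subhypergraph of `H` is isomorphic to `F`);
equivalently, `F` embeds into `H`. -/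
def HasCopy (F H : ThreeGraph) : Prop :=
  ∃ f : ℕ → ℕ, Set.InjOn f ↑F.verts ∧ (∀ v ∈ F.verts, f v ∈ H.verts) ∧
    ∀ e ∈ F.edges, e.image f ∈ H.edges

/-- `F` and `H` are isomorphic 3-graphs. -/
def Iso (F H : ThreeGraph) : Prop :=
  ∃ f : ℕ → ℕ, Set.InjOn f ↑F.verts ∧ F.verts.image f = H.verts ∧
    F.edges.image (fun e => e.image f) = H.edges

def Adj (H : ThreeGraph) (u v : ℕ) : Prop :=
  ∃ e ∈ H.edges, u ∈ e ∧ v ∈ e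

/-- Connectivity: any two vertices are joined by a walk
(consecutive vertices share an edge). -/
def Connected (H : ThreeGraph) : Prop :=
  ∀ u ∈ H.verts, ∀ v ∈ H.verts, Relation.ReflTransGen H.Adj u v

/-- `P`: the loose 3-uniform path of length three. -/
noncomputable def pathP : ThreeGraph :=
  mk3 (Finset.range 7) (fun e => e = {0,1,2} ∨ e = {2,3,4} ∨ e = {4,5,6})

/-- `C`: the triangle. -/
noncomputable def triC : ThreeGraph :=
  mk3 (Finset.range 6) (fun e => e = {0,1,2} ∨ e = {2,3,4} ∨ e = {4,5,0})

/-- `M`: a pair of disjoint edges. -/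
noncomputable def matchM : ThreeGraph :=
  mk3 (Finset.range 6) (fun e => e = {0,1,2} ∨ e = {3,4,5})

/-- `P₂`: a pair of edges sharing exactly one vertex. -/
noncomputable def path2 : ThreeGraph :=
  mk3 (Finset.range 5) (fun e => e = {0,1,2} ∨ e = {2,3,4})

/-- `P₂ ∪ K₃`. -/
noncomputable def p2K3 : ThreeGraph :=
  mk3 (Finset.range 8) (fun e => e = {0,1,2} ∨ e = {2,3,4} ∨ e = {5,6,7})

/-- `K_m`: the complete 3-graph on `m` vertices. -/
noncomputable def K (m : ℕ) : ThreeGraph := mk3 (Finset.range m) (fun _ => True)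

/-- `S_n`: the full star on `n` vertices, with center `0`. -/
noncomputable def starS (n : ℕ) : ThreeGraph := mk3 (Finset.range n) (fun e => 0 ∈ e)

/-- The comet `Co(n)`: `K₄` on `{0,1,2,3}` and the full star with center `0`
on `{0} ∪ {4,…,n-1}`. -/
noncomputable def comet (n : ℕ) : ThreeGraph :=
  mk3 (Finset.range n)
    (fun e => e ⊆ ({0,1,2,3} : Finset ℕ) ∨ (0 ∈ e ∧ ∀ v ∈ e, v = 0 ∨ 4 ≤ v))

/-- `G₁(n)` with `x,y,z = 0,1,2` and `v = 3`. -/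
noncomputable def G1 (n : ℕ) : ThreeGraph :=
  mk3 (Finset.range n)
    (fun e => e = {0,1,2} ∨ (3 ∈ e ∧ (e ∩ ({0,1,2} : Finset ℕ)).Nonempty))

/-- `G₂(n)` with `x,y,z = 0,1,2`. -/
noncomputable def G2 (n : ℕ) : ThreeGraph :=
  mk3 (Finset.range n)
    (fun e => e = {0,1,2} ∨ (e ∩ ({0,1,2} : Finset ℕ)).card = 2)

/-- `G₃(n)` with `x = 0`, `y₁,y₂ = 1,2`, `z₁,z₂ = 3,4`. -/
noncomputable def G3 (n : ℕ) : ThreeGraph :=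
  mk3 (Finset.range n)
    (fun e => (e ⊆ ({0,1,2,3,4} : Finset ℕ) ∧ e ≠ {1,2,3} ∧ e ≠ {1,2,4}) ∨
      (∃ v ∈ e, 5 ≤ v ∧ (e = {0,3,v} ∨ e = {0,4,v})))

/-- `K₅⁺²`: `K₅` on `{0,…,4}` with `a,b = 0,1`, `c,d = 5,6`. -/
noncomputable def K5plus2 : ThreeGraph :=
  mk3 (Finset.range 7)
    (fun e => e ⊆ ({0,1,2,3,4} : Finset ℕ) ∨ e = {0,1,5} ∨ e = {0,1,6})

/-- The rocket `Ro(n)`: the full star with center `x = 0` on `{0} ∪ {5,…,n-1}`,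
plus vertices `a,b,c,d = 1,2,3,4` and edges `{x,a,b}, {a,b,c}, {a,b,d}`. -/
noncomputable def rocket (n : ℕ) : ThreeGraph :=
  mk3 (Finset.range n)
    (fun e => (0 ∈ e ∧ ∀ v ∈ e, v = 0 ∨ 5 ≤ v) ∨ e = {0,1,2} ∨ e = {1,2,3} ∨ e = {1,2,4})

/-- `K₆ ∪ K₁`. -/
noncomputable def K6K1 : ThreeGraph :=
  mk3 (Finset.range 7) (fun e => e ⊆ Finset.range 6)

/-- `K₆ ∪ K_{n-6}`. -/
noncomputable def K6K (n : ℕ) : ThreeGraph :=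
  mk3 (Finset.range n) (fun e => e ⊆ Finset.range 6 ∨ ∀ v ∈ e, 6 ≤ v)

/-- `K₆ ∪ S_{n-6}` (star centered at `6`). -/
noncomputable def K6star (n : ℕ) : ThreeGraph :=
  mk3 (Finset.range n) (fun e => e ⊆ Finset.range 6 ∨ (6 ∈ e ∧ ∀ v ∈ e, 6 ≤ v))

/-- `K₄ ∪ S_{n-4}` (star centered at `4`). -/
noncomputable def K4star (n : ℕ) : ThreeGraph :=
  mk3 (Finset.range n) (fun e => e ⊆ Finset.range 4 ∨ (4 ∈ e ∧ ∀ v ∈ e, 4 ≤ v))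

/-- `K₆ ∪ K₆ ∪ K₁` (on 13 vertices). -/
noncomputable def K6K6K1 : ThreeGraph :=
  mk3 (Finset.range 13) (fun e => e ⊆ Finset.range 6 ∨ e ⊆ Finset.Ico 6 12)

/-- `2K₆ ∪ 2K₁` (on 14 vertices). -/
noncomputable def twoK6twoK1 : ThreeGraph :=
  mk3 (Finset.range 14) (fun e => e ⊆ Finset.range 6 ∨ e ⊆ Finset.Ico 6 12)

/-- `K₅ ∪ K₅`. -/
noncomputable def K5K5 : ThreeGraph :=
  mk3 (Finset.range 10) (fun e => e ⊆ Finset.range 5 ∨ ∀ v ∈ e, 5 ≤ v)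

/-- `K₆ ∪ G₁(7)` (with `G₁(7)` on `{6,…,12}`, `x,y,z = 6,7,8`, `v = 9`). -/
noncomputable def K6G1 : ThreeGraph :=
  mk3 (Finset.range 13)
    (fun e => e ⊆ Finset.range 6 ∨ ((∀ v ∈ e, 6 ≤ v) ∧
      (e = {6,7,8} ∨ (9 ∈ e ∧ (e ∩ ({6,7,8} : Finset ℕ)).Nonempty))))

/-- `K₆ ∪ G₂(7)` (with `G₂(7)` on `{6,…,12}`, `x,y,z = 6,7,8`). -/
noncomputable def K6G2 : ThreeGraph :=
  mk3 (Finset.range 13)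
    (fun e => e ⊆ Finset.range 6 ∨ ((∀ v ∈ e, 6 ≤ v) ∧
      (e = {6,7,8} ∨ (e ∩ ({6,7,8} : Finset ℕ)).card = 2)))

/-- `H` is a member of `S` with the maximum number of edges. -/
def IsMaxIn (S : Set ThreeGraph) (H : ThreeGraph) : Prop :=
  H ∈ S ∧ ∀ G ∈ S, G.edges.card ≤ H.edges.card

/-- `cand 𝓕 n s` is the set of `n`-vertex `𝓕`-free 3-graphs not contained in any
`t`-extremal 3-graph for `t ≤ s`; so the `(s+1)`-st order Turán number of `𝓕` is the
maximal number of edges over `cand 𝓕 n s`, and the `(s+1)`-extremal 3-graphs are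
exactly those satisfying `IsMaxIn (cand 𝓕 n s)`. -/
def cand (𝓕 : Set ThreeGraph) (n : ℕ) : ℕ → Set ThreeGraph
  | 0 => {H | H.verts.card = n ∧ ∀ F ∈ 𝓕, ¬ HasCopy F H}
  | (s+1) => {H | H ∈ cand 𝓕 n s ∧ ∀ H', IsMaxIn (cand 𝓕 n s) H' → ¬ HasCopy H H'}

end ThreeGraph

open ThreeGraph

/-!
If two edges meet in exactly one vertex `u`, every edge missing `u` contains the two other
vertices of one of them: otherwise the three edges form `P`, `C` or `P₂ ∪ K₃`.

Fix disjoint edges `m`, `m'` of a 3-graph on `n` vertices. By the above, every edge meets `m`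
or `m'` in two vertices or avoids both. The edges meeting `m` in two vertices pairwise share two
vertices, so they all contain one pair or all lie in four vertices. No two edges avoiding
`m ∪ m'` share exactly one vertex, so there are at most as many of them as vertices they cover.
If the edges meeting `m` twice all contain a pair `p ⊆ m`, their third vertices miss the vertices
covered by the edges avoiding `m ∪ m'`, and the count gives `2n - 4`; if neither side is of this
kind, there are at most `n + 2` edges. All triples through `{0, 1}` or through `{2, 3}` attain
`2n - 4`.
-/

open Finset

variable {α : Type*}

namespace Finset

lemma eq_empty_or_eq_singleton_of_card_lt_two {s : Finset α} (h : #s < 2) :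
    s = ∅ ∨ ∃ a, s = {a} := by
  interval_cases hs : #s
  · exact Or.inl (card_eq_zero.mp hs)
  · exact Or.inr (card_eq_one.mp hs)

variable [DecidableEq α]

lemma subset_of_card_le_card_inter {s t : Finset α} (h : #s ≤ #(s ∩ t)) : s ⊆ t :=
  inter_eq_left.mp (eq_of_subset_of_card_le inter_subset_left h)

lemma two_le_card_inter_of_card_inter_ne_one {s t : Finset α} (hst : (s ∩ t).Nonempty)
    (h1 : #(s ∩ t) ≠ 1) : 2 ≤ #(s ∩ t) := by
  have := hst.card_pos
  omega

lemma card_inter_add_card_inter_le {e m m' : Finset α} (hd : Disjoint m m') :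
    #(e ∩ m) + #(e ∩ m') ≤ #e := by
  rw [← card_union_of_disjoint (hd.mono inter_subset_right inter_subset_right)]
  exact card_le_card (union_subset inter_subset_left inter_subset_left)

lemma card_inter_union_add_card_inter_inter (k s t : Finset α) :
    #(k ∩ (s ∪ t)) + #(k ∩ (s ∩ t)) = #(k ∩ s) + #(k ∩ t) := by
  rw [inter_union_distrib_left, inter_inter_distrib_left, card_union_add_card_inter]

lemma inter_inter_nonempty_of_card_eq_three {a b c : Finset α} (hc : #c = 3)
    (ha : 2 ≤ #(a ∩ c)) (hb : 2 ≤ #(b ∩ c)) : (a ∩ b ∩ c).Nonempty := by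
  have := inter_nonempty_of_card_lt_card_add_card (inter_subset_right (s₁ := a) (s₂ := c))
    (inter_subset_right (s₁ := b)) (by omega)
  rwa [← inter_inter_distrib_right] at this

lemma card_inter_eq_two_of_card_eq_three {e e' : Finset α} (he : #e = 3) (he' : #e' = 3)
    (hne : e ≠ e') (h2 : 2 ≤ #(e ∩ e')) : #(e ∩ e') = 2 := by
  refine le_antisymm ?_ h2
  by_contra! h3
  exact hne (eq_of_subset_of_card_le (subset_of_card_le_card_inter (by omega)) (by omega))

lemma exists_eq_triple_of_card_eq_three {e : Finset α} {a b : α}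
    (he : #e = 3) (ha : a ∈ e) (hb : b ∈ e) (hab : a ≠ b) : ∃ c, e = {a, c, b} := by
  have hsub : {a, b} ⊆ e := insert_subset ha (singleton_subset_iff.mpr hb)
  obtain ⟨c, hc⟩ := card_eq_one.mp (by rw [card_sdiff_of_subset hsub, he, card_pair hab])
  refine ⟨c, ?_⟩
  rw [← sdiff_union_of_subset hsub, hc]
  ext
  simp

end Finset

variable [DecidableEq α]

section TripleFamilies

variable {F : Finset (Finset α)}

lemma card_le_card_of_forall_pair_subset {p T : Finset α} (hp : #p = 2)
    (hF : ∀ e ∈ F, #e = 3 ∧ p ⊆ e ∧ e \ p ⊆ T) : #F ≤ #T := by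
  refine (card_le_card fun e he => ?_).trans (card_image_le (f := (insert · p)))
  obtain ⟨hc, hpe, hT⟩ := hF e he
  obtain ⟨a, hap, rfl⟩ := exists_eq_insert_iff.mpr ⟨hpe, by omega⟩
  exact mem_image.mpr ⟨a, hT (by simp [hap]), rfl⟩

lemma card_le_four_of_card_biUnion_eq_four (hc : ∀ e ∈ F, #e = 3)
    (h4 : #(F.biUnion id) = 4) : #F ≤ 4 := by
  calc #F ≤ #((F.biUnion id).powersetCard 3) :=
        card_le_card fun e he => mem_powersetCard.mpr ⟨subset_biUnion_of_mem id he, hc e he⟩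
    _ = 4 := by rw [card_powersetCard, h4]; rfl

/-- Once some member `h` misses a vertex of `p = e ∩ e'`, it lies in `e ∪ e'`; a member `k`
outside `e ∪ e'` would have to meet `e ∪ e'` exactly in `p`, and then meet `h` only in `p ∩ h`. -/
lemma subset_union_of_pairwise_two_le_card_inter (hc : ∀ e ∈ F, #e = 3)
    (hF : (F : Set (Finset α)).Pairwise fun e e' => 2 ≤ #(e ∩ e'))
    {e e' h : Finset α} (he : e ∈ F) (he' : e' ∈ F) (hh : h ∈ F) (hp : #(e ∩ e') = 2)
    (hph : ¬ e ∩ e' ⊆ h) {k : Finset α} (hk : k ∈ F) : k ⊆ e ∪ e' := by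
  have hmeet : ∀ g ∈ F, g ≠ e → g ≠ e' → 4 ≤ #(g ∩ (e ∪ e')) + #(g ∩ (e ∩ e')) := by
    intro g hg hge hge'
    rw [card_inter_union_add_card_inter_inter]
    have := hF hg he hge
    have := hF hg he' hge'
    omega
  have hne : ∀ g, e ∩ e' ⊆ g → g ≠ h := by rintro g hg rfl; exact hph hg
  have hhp : #(h ∩ (e ∩ e')) ≤ 1 := by
    by_contra! h2
    exact hph (subset_of_card_le_card_inter (by rw [inter_comm _ h]; omega))
  have hhQ : h ⊆ e ∪ e' := by
    have := hmeet h hh (hne e inter_subset_left).symm (hne e' inter_subset_right).symm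
    exact subset_of_card_le_card_inter (by rw [hc h hh]; omega)
  by_contra hkQ
  have hkQ2 : #(k ∩ (e ∪ e')) ≤ 2 := by
    by_contra! h3
    exact hkQ (subset_of_card_le_card_inter (by rw [hc k hk]; omega))
  have hkp : 2 ≤ #(k ∩ (e ∩ e')) := by
    have := hmeet k hk (by rintro rfl; simp at hkQ) (by rintro rfl; simp at hkQ)
    omega
  have hpk : e ∩ e' ⊆ k := subset_of_card_le_card_inter (by rw [inter_comm _ k]; omega)
  have hkQp : k ∩ (e ∪ e') = e ∩ e' :=
    (eq_of_subset_of_card_le (subset_inter hpk (inter_subset_left.trans subset_union_left))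
      (by omega)).symm
  have hkh : k ∩ h ⊆ h ∩ (e ∩ e') := fun x hx => by
    obtain ⟨hxk, hxh⟩ := mem_inter.mp hx
    exact mem_inter.mpr ⟨hxh, hkQp ▸ mem_inter.mpr ⟨hxk, hhQ hxh⟩⟩
  have := hF hk hh (hne k hpk)
  have := card_le_card hkh
  omega

lemma exists_pair_subset_or_card_biUnion_eq_four (hc : ∀ e ∈ F, #e = 3)
    (hF : (F : Set (Finset α)).Pairwise fun e e' => 2 ≤ #(e ∩ e')) (hne : F.Nonempty) :
    (∃ p : Finset α, #p = 2 ∧ ∀ e ∈ F, p ⊆ e) ∨ #(F.biUnion id) = 4 := by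
  obtain ⟨e, he⟩ := hne
  by_cases hsingle : ∀ e' ∈ F, e' = e
  · obtain ⟨p, hpe, hp⟩ := exists_subset_card_eq (s := e) (n := 2) (by rw [hc e he]; omega)
    exact Or.inl ⟨p, hp, fun e' he' => hsingle e' he' ▸ hpe⟩
  push Not at hsingle
  obtain ⟨e', he', hne⟩ := hsingle
  have hp := card_inter_eq_two_of_card_eq_three (hc e he) (hc e' he') hne.symm
    (hF he he' hne.symm)
  by_cases hstar : ∀ h ∈ F, e ∩ e' ⊆ h
  · exact Or.inl ⟨e ∩ e', hp, hstar⟩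
  push Not at hstar
  obtain ⟨h, hh, hph⟩ := hstar
  have hspan : F.biUnion id = e ∪ e' :=
    Subset.antisymm
      (biUnion_subset.mpr fun k hk =>
        subset_union_of_pairwise_two_le_card_inter hc hF he he' hh hp hph hk)
      (union_subset (subset_biUnion_of_mem id he) (subset_biUnion_of_mem id he'))
  right
  have := card_union_add_card_inter e e'
  rw [hc e he, hc e' he', hp] at this
  rw [hspan]
  omega

lemma card_le_card_biUnion_of_pairwise_two_le_card_inter (hc : ∀ e ∈ F, #e = 3)
    (hF : (F : Set (Finset α)).Pairwise fun e e' => 2 ≤ #(e ∩ e')) :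
    #F ≤ #(F.biUnion id) := by
  obtain rfl | hne := F.eq_empty_or_nonempty
  · simp
  obtain ⟨p, hp, hpF⟩ | h4 := exists_pair_subset_or_card_biUnion_eq_four hc hF hne
  · calc #F ≤ #(F.biUnion id \ p) := card_le_card_of_forall_pair_subset hp fun e he =>
          ⟨hc e he, hpF e he, sdiff_subset_sdiff (subset_biUnion_of_mem id he) le_rfl⟩
      _ ≤ #(F.biUnion id) := card_le_card sdiff_subset
  · exact h4 ▸ card_le_four_of_card_biUnion_eq_four hc h4

lemma card_add_two_le_of_pairwise_two_le_card_inter {V : Finset α} (hc : ∀ e ∈ F, #e = 3)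
    (hF : (F : Set (Finset α)).Pairwise fun e e' => 2 ≤ #(e ∩ e'))
    (hV : ∀ e ∈ F, e ⊆ V) (h6 : 6 ≤ #V) : #F + 2 ≤ #V := by
  obtain rfl | hne := F.eq_empty_or_nonempty
  · simp only [card_empty]
    omega
  obtain ⟨p, hp, hpF⟩ | h4 := exists_pair_subset_or_card_biUnion_eq_four hc hF hne
  · obtain ⟨e, he⟩ := hne
    have hpV : p ⊆ V := (hpF e he).trans (hV e he)
    have : #F ≤ #(V \ p) := card_le_card_of_forall_pair_subset hp fun e he =>
      ⟨hc e he, hpF e he, sdiff_subset_sdiff (hV e he) le_rfl⟩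
    rw [card_sdiff_of_subset hpV, hp] at this
    omega
  · have := card_le_four_of_card_biUnion_eq_four hc h4
    omega

lemma two_le_card_inter_of_not_disjoint (hc : ∀ e ∈ F, #e = 3)
    (hF : (F : Set (Finset α)).Pairwise fun e e' => #(e ∩ e') ≠ 1) {c e : Finset α}
    (hcF : c ∈ F) (heF : e ∈ F) (hce : ¬ Disjoint c e) : 2 ≤ #(c ∩ e) := by
  rcases eq_or_ne c e with rfl | hne
  · rw [inter_self, hc c hcF]
    omega
  · exact two_le_card_inter_of_card_inter_ne_one (not_disjoint_iff_nonempty_inter.mp hce)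
      (hF hcF heF hne)

/-- The members meeting a fixed member `e` pairwise share two vertices, and no other member meets
a vertex they cover; so the family splits into such clusters. -/
lemma card_le_card_biUnion_of_pairwise_card_inter_ne_one (hc : ∀ e ∈ F, #e = 3)
    (hF : (F : Set (Finset α)).Pairwise fun e e' => #(e ∩ e') ≠ 1) :
    #F ≤ #(F.biUnion id) := by
  induction F using Finset.strongInduction with
  | H F ih =>
  obtain rfl | ⟨e, he⟩ := F.eq_empty_or_nonempty
  · simp
  set C := {h ∈ F | ¬ Disjoint h e}
  have hCF : C ⊆ F := filter_subset _ _
  have hCe : ∀ c ∈ C, 2 ≤ #(c ∩ e) := fun c hc' =>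
    two_le_card_inter_of_not_disjoint hc hF (hCF hc') he (mem_filter.mp hc').2
  have hCpair : (C : Set (Finset α)).Pairwise fun c c' => 2 ≤ #(c ∩ c') :=
    fun c hc' c' hc'' _ => two_le_card_inter_of_not_disjoint hc hF (hCF hc') (hCF hc'')
      (not_disjoint_iff_nonempty_inter.mpr
        ((inter_inter_nonempty_of_card_eq_three (hc e he) (hCe c hc') (hCe c' hc'')).mono
          inter_subset_left))
  have hdisj : Disjoint (C.biUnion id) ((F \ C).biUnion id) := by
    refine disjoint_left.mpr fun x hxC hxR => ?_
    obtain ⟨c, hc', hxc⟩ := mem_biUnion.mp hxC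
    obtain ⟨h, hh, hxh⟩ := mem_biUnion.mp hxR
    obtain ⟨hhF, hhC⟩ := mem_sdiff.mp hh
    have hhc := two_le_card_inter_of_not_disjoint hc hF hhF (hCF hc')
      (not_disjoint_iff.mpr ⟨x, hxh, hxc⟩)
    obtain ⟨y, hy⟩ :=
      inter_inter_nonempty_of_card_eq_three (hc c (hCF hc')) hhc (inter_comm c e ▸ hCe c hc')
    exact hhC (mem_filter.mpr ⟨hhF, not_disjoint_iff.mpr ⟨y, by simp_all⟩⟩)
  have hlt : F \ C ⊂ F := sdiff_ssubset hCF ⟨e, mem_filter.mpr ⟨he, by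
    rw [disjoint_self_iff_empty, ← card_eq_zero, hc e he]; omega⟩⟩
  have ihR := ih (F \ C) hlt (fun h hh => hc h (mem_sdiff.mp hh).1) (hF.mono (by simp))
  calc #F = #C + #(F \ C) := by rw [add_comm, card_sdiff_add_card_eq_card hCF]
    _ ≤ #(C.biUnion id) + #((F \ C).biUnion id) :=
        add_le_add (card_le_card_biUnion_of_pairwise_two_le_card_inter
          (fun c hc' => hc c (hCF hc')) hCpair) ihR
    _ = #(C.biUnion id ∪ (F \ C).biUnion id) := (card_union_of_disjoint hdisj).symm
    _ ≤ #(F.biUnion id) := card_le_card (union_subset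
          (biUnion_subset_biUnion_of_subset_left _ hCF)
          (biUnion_subset_biUnion_of_subset_left _ sdiff_subset))

end TripleFamilies

/-- The edge sets of 3-graphs with no copy of `P`, `C` or `P₂ ∪ K₃`, written through the
intersection patterns of the edges of such a copy (see `ThreeGraph.pcp2K3Free_edges_iff`). -/
structure PCP2K3Free (E : Finset (Finset α)) : Prop where
  card_eq_three : ∀ e ∈ E, #e = 3
  not_path : ¬ ∃ x ∈ E, ∃ y ∈ E, ∃ z ∈ E, ∃ u w, x ∩ y = {u} ∧ y ∩ z = {w} ∧ Disjoint x z
  not_triangle : ¬ ∃ x ∈ E, ∃ y ∈ E, ∃ z ∈ E, ∃ u w s,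
    x ∩ y = {u} ∧ y ∩ z = {w} ∧ x ∩ z = {s} ∧ u ≠ w
  not_p2K3 : ¬ ∃ x ∈ E, ∃ y ∈ E, ∃ z ∈ E, ∃ u, x ∩ y = {u} ∧ Disjoint z (x ∪ y)

def heavy (E : Finset (Finset α)) (m : Finset α) : Finset (Finset α) := {e ∈ E | 2 ≤ #(e ∩ m)}

def avoiding (E : Finset (Finset α)) (s : Finset α) : Finset (Finset α) := {e ∈ E | Disjoint e s}

lemma biUnion_avoiding_subset_sdiff {E : Finset (Finset α)} {s V : Finset α}
    (hV : ∀ e ∈ E, e ⊆ V) : (avoiding E s).biUnion id ⊆ V \ s := by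
  refine biUnion_subset.mpr fun e he x hx => ?_
  obtain ⟨heE, hes⟩ := mem_filter.mp he
  exact mem_sdiff.mpr ⟨hV e heE hx, disjoint_left.mp hes hx⟩

namespace PCP2K3Free

variable {E : Finset (Finset α)} {m m' V : Finset α}

/-- Otherwise `z` meets each of `x`, `y` in at most one vertex, and the four cases give
`P₂ ∪ K₃`, two loose paths and a triangle. -/
theorem two_le_card_inter_or (hE : PCP2K3Free E) {x y z : Finset α} (hx : x ∈ E) (hy : y ∈ E)
    (hz : z ∈ E) {u : α} (hxy : x ∩ y = {u}) (hu : u ∉ z) :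
    2 ≤ #(x ∩ z) ∨ 2 ≤ #(y ∩ z) := by
  by_contra! h
  rcases eq_empty_or_eq_singleton_of_card_lt_two h.1 with hxz | ⟨s, hxz⟩ <;>
    rcases eq_empty_or_eq_singleton_of_card_lt_two h.2 with hyz | ⟨s', hyz⟩
  · refine hE.not_p2K3 ⟨x, hx, y, hy, z, hz, u, hxy, ?_⟩
    rw [disjoint_union_right, disjoint_comm, disjoint_comm (a := z)]
    exact ⟨disjoint_iff_inter_eq_empty.mpr hxz, disjoint_iff_inter_eq_empty.mpr hyz⟩
  · exact hE.not_path ⟨x, hx, y, hy, z, hz, u, s', hxy, hyz, disjoint_iff_inter_eq_empty.mpr hxz⟩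
  · exact hE.not_path ⟨y, hy, x, hx, z, hz, u, s, by rwa [inter_comm], hxz,
      disjoint_iff_inter_eq_empty.mpr hyz⟩
  · refine hE.not_triangle ⟨x, hx, y, hy, z, hz, u, s', s, hxy, hyz, hxz, ?_⟩
    rintro rfl
    exact hu (mem_inter.mp (hyz ▸ mem_singleton_self u)).2

lemma two_le_card_inter_of_card_inter_eq_one (hE : PCP2K3Free E) (hm : m ∈ E) (hm' : m' ∈ E)
    (hd : Disjoint m m') {e : Finset α} (he : e ∈ E) (h1 : #(e ∩ m) = 1) : 2 ≤ #(e ∩ m') := by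
  obtain ⟨u, hu⟩ := card_eq_one.mp h1
  have hum : u ∈ m := (mem_inter.mp (hu ▸ mem_singleton_self u)).2
  refine (hE.two_le_card_inter_or he hm hm' hu (disjoint_left.mp hd hum)).resolve_right ?_
  rw [disjoint_iff_inter_eq_empty.mp hd]
  simp

lemma mem_heavy_or_mem_heavy_or_mem_avoiding (hE : PCP2K3Free E) (hm : m ∈ E) (hm' : m' ∈ E)
    (hd : Disjoint m m') {e : Finset α} (he : e ∈ E) :
    e ∈ heavy E m ∨ e ∈ heavy E m' ∨ e ∈ avoiding E (m ∪ m') := by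
  simp only [heavy, avoiding, mem_filter, he, true_and, disjoint_union_right]
  simp only [disjoint_iff_inter_eq_empty, ← card_eq_zero]
  have h1 := hE.two_le_card_inter_of_card_inter_eq_one hm hm' hd he
  have h2 := hE.two_le_card_inter_of_card_inter_eq_one hm' hm hd.symm he
  omega

lemma card_le_card_heavy_add_card_heavy_add_card_avoiding (hE : PCP2K3Free E) (hm : m ∈ E)
    (hm' : m' ∈ E) (hd : Disjoint m m') :
    #E ≤ #(heavy E m) + #(heavy E m') + #(avoiding E (m ∪ m')) := by
  refine (card_le_card fun e he => ?_).trans ((card_union_le _ _).trans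
    (Nat.add_le_add_right (card_union_le _ _) _))
  rcases hE.mem_heavy_or_mem_heavy_or_mem_avoiding hm hm' hd he with h | h | h <;> simp [h]

lemma pairwise_two_le_card_inter_heavy (hE : PCP2K3Free E) (hm : m ∈ E) (hm' : m' ∈ E)
    (hd : Disjoint m m') : (heavy E m : Set (Finset α)).Pairwise fun e e' => 2 ≤ #(e ∩ e') := by
  intro e he e' he' hne
  simp only [heavy, coe_filter, Set.mem_ofPred_eq] at he he'
  obtain ⟨w, hw⟩ := inter_inter_nonempty_of_card_eq_three (hE.card_eq_three m hm) he.2 he'.2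
  refine two_le_card_inter_of_card_inter_ne_one ⟨w, (mem_inter.mp hw).1⟩ fun h1 => ?_
  obtain ⟨v, hv⟩ := card_eq_one.mp h1
  have hwv : w = v := mem_singleton.mp (hv ▸ (mem_inter.mp hw).1)
  have hvm' : v ∉ m' := disjoint_left.mp hd (hwv ▸ (mem_inter.mp hw).2)
  have := card_inter_add_card_inter_le (e := e) hd
  have := card_inter_add_card_inter_le (e := e') hd
  have := hE.card_eq_three e he.1
  have := hE.card_eq_three e' he'.1
  have := hE.two_le_card_inter_or he.1 he'.1 hm' hv hvm'
  omega

lemma pairwise_card_inter_ne_one_avoiding (hE : PCP2K3Free E) (hm : m ∈ E) {s : Finset α}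
    (hms : m ⊆ s) : (avoiding E s : Set (Finset α)).Pairwise fun e e' => #(e ∩ e') ≠ 1 := by
  intro e he e' he' _ h1
  simp only [avoiding, coe_filter, Set.mem_ofPred_eq] at he he'
  obtain ⟨u, hu⟩ := card_eq_one.mp h1
  have hum : u ∉ m :=
    disjoint_left.mp (he.2.mono_right hms) (mem_inter.mp (hu ▸ mem_singleton_self u)).1
  have h0 : ∀ g, Disjoint g s → #(g ∩ m) = 0 := fun g hg =>
    card_eq_zero.mpr (disjoint_iff_inter_eq_empty.mp (hg.mono_right hms))
  have := h0 e he.2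
  have := h0 e' he'.2
  have := hE.two_le_card_inter_or he.1 he'.1 hm hu hum
  omega

lemma card_avoiding_le_card_biUnion (hE : PCP2K3Free E) (hm : m ∈ E) {s : Finset α}
    (hms : m ⊆ s) : #(avoiding E s) ≤ #((avoiding E s).biUnion id) :=
  card_le_card_biUnion_of_pairwise_card_inter_ne_one
    (fun e he => hE.card_eq_three e (mem_filter.mp he).1)
    (hE.pairwise_card_inter_ne_one_avoiding hm hms)

lemma card_heavy_add_two_le (hE : PCP2K3Free E) (hV : ∀ e ∈ E, e ⊆ V) (hm : m ∈ E)
    (hm' : m' ∈ E) (hd : Disjoint m m') (h6 : 6 ≤ #V) : #(heavy E m) + 2 ≤ #V :=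
  card_add_two_le_of_pairwise_two_le_card_inter
    (fun e he => hE.card_eq_three e (mem_filter.mp he).1)
    (hE.pairwise_two_le_card_inter_heavy hm hm' hd) (fun e he => hV e (mem_filter.mp he).1) h6

lemma card_heavy_le_four (hE : PCP2K3Free E) (hm : m ∈ E) (hm' : m' ∈ E) (hd : Disjoint m m')
    (hstar : ¬ ∃ p ⊆ m, #p = 2 ∧ ∀ e ∈ heavy E m, p ⊆ e) : #(heavy E m) ≤ 4 := by
  have hc : ∀ e ∈ heavy E m, #e = 3 := fun e he => hE.card_eq_three e (mem_filter.mp he).1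
  have hne : (heavy E m).Nonempty :=
    ⟨m, mem_filter.mpr ⟨hm, by rw [inter_self, hE.card_eq_three m hm]; omega⟩⟩
  obtain ⟨q, hq, hqF⟩ | h4 := exists_pair_subset_or_card_biUnion_eq_four hc
    (hE.pairwise_two_le_card_inter_heavy hm hm' hd) hne
  · have hqm : ¬ q ⊆ m := fun hqm => hstar ⟨q, hqm, hq, hqF⟩
    have hthird : ∀ e ∈ heavy E m, e \ q ⊆ m := by
      intro e he t ht
      by_contra htm
      have h1 : #(e \ q) ≤ 1 := by rw [card_sdiff_of_subset (hqF e he), hc e he, hq]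
      have hsub : e ∩ m ⊆ q ∩ m := fun x hx => by
        refine mem_inter.mpr ⟨?_, (mem_inter.mp hx).2⟩
        by_contra hxq
        have hxt : x = t := card_le_one.mp h1 x (mem_sdiff.mpr ⟨(mem_inter.mp hx).1, hxq⟩) t ht
        exact htm (hxt ▸ (mem_inter.mp hx).2)
      have := card_le_card hsub
      have := (mem_filter.mp he).2
      exact hqm (subset_of_card_le_card_inter (by omega))
    have := card_le_card_of_forall_pair_subset hq fun e he => ⟨hc e he, hqF e he, hthird e he⟩
    rw [hE.card_eq_three m hm] at this
    omega
  · exact card_le_four_of_card_biUnion_eq_four hc h4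

/-- A common vertex `t` would make `e ∩ e₀ = {t}` with `t ∉ m'`, but neither `e` nor `e₀` meets
`m'` in two vertices. -/
lemma disjoint_sdiff_biUnion_avoiding (hE : PCP2K3Free E) (hm' : m' ∈ E) (hd : Disjoint m m')
    {p : Finset α} (hpm : p ⊆ m) (hp : #p = 2) {e : Finset α} (he : e ∈ heavy E m)
    (hpe : p ⊆ e) : Disjoint (e \ p) ((avoiding E (m ∪ m')).biUnion id) := by
  refine disjoint_left.mpr fun t ht htW => ?_
  obtain ⟨heE, hem⟩ := mem_filter.mp he
  obtain ⟨e₀, he₀, hte₀ : t ∈ e₀⟩ := mem_biUnion.mp htW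
  obtain ⟨he₀E, he₀m⟩ := mem_filter.mp he₀
  rw [disjoint_union_right] at he₀m
  obtain ⟨a, hap, rfl⟩ := exists_eq_insert_iff.mpr ⟨hpe, by rw [hp, hE.card_eq_three e heE]⟩
  obtain rfl : t = a := by simpa [(mem_sdiff.mp ht).2] using (mem_sdiff.mp ht).1
  have hee₀ : insert t p ∩ e₀ = {t} := by
    rw [insert_inter_of_mem hte₀,
      disjoint_iff_inter_eq_empty.mp (disjoint_comm.mp he₀m.1 |>.mono_left hpm)]
    rfl
  have := card_inter_add_card_inter_le (e := insert t p) hd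
  have := card_eq_zero.mpr (disjoint_iff_inter_eq_empty.mp he₀m.2)
  have := hE.card_eq_three _ heE
  have := hE.two_le_card_inter_or heE he₀E hm' hee₀ (disjoint_left.mp he₀m.2 hte₀)
  omega

lemma card_add_four_le_of_pair_subset (hE : PCP2K3Free E) (hV : ∀ e ∈ E, e ⊆ V) (hm : m ∈ E)
    (hm' : m' ∈ E) (hd : Disjoint m m') (h6 : 6 ≤ #V) {p : Finset α} (hpm : p ⊆ m)
    (hp : #p = 2) (hpF : ∀ e ∈ heavy E m, p ⊆ e) : #E + 4 ≤ 2 * #V := by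
  have hW := hE.card_avoiding_le_card_biUnion hm (subset_union_left (s₂ := m'))
  set W := (avoiding E (m ∪ m')).biUnion id
  have hpV : p ⊆ V := hpm.trans (hV m hm)
  have hWp : W ⊆ V \ p := (biUnion_avoiding_subset_sdiff hV).trans
    (sdiff_subset_sdiff le_rfl (hpm.trans subset_union_left))
  have hheavy := card_le_card_of_forall_pair_subset (F := heavy E m) hp fun e he =>
    ⟨hE.card_eq_three e (mem_filter.mp he).1, hpF e he,
      subset_sdiff.mpr ⟨sdiff_subset_sdiff (hV e (mem_filter.mp he).1) le_rfl,
        hE.disjoint_sdiff_biUnion_avoiding hm' hd hpm hp he (hpF e he)⟩⟩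
  rw [card_sdiff_of_subset hWp, card_sdiff_of_subset hpV, hp] at hheavy
  have := card_le_card hWp
  rw [card_sdiff_of_subset hpV, hp] at this
  have := hE.card_heavy_add_two_le hV hm' hm hd.symm h6
  have := hE.card_le_card_heavy_add_card_heavy_add_card_avoiding hm hm' hd
  omega

theorem card_add_four_le (hE : PCP2K3Free E) (hV : ∀ e ∈ E, e ⊆ V) (hm : m ∈ E)
    (hm' : m' ∈ E) (hd : Disjoint m m') (h6 : 6 ≤ #V) : #E + 4 ≤ 2 * #V := by
  by_cases hstar : ∃ p ⊆ m, #p = 2 ∧ ∀ e ∈ heavy E m, p ⊆ e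
  · obtain ⟨p, hpm, hp, hpF⟩ := hstar
    exact hE.card_add_four_le_of_pair_subset hV hm hm' hd h6 hpm hp hpF
  by_cases hstar' : ∃ p ⊆ m', #p = 2 ∧ ∀ e ∈ heavy E m', p ⊆ e
  · obtain ⟨p, hpm, hp, hpF⟩ := hstar'
    exact hE.card_add_four_le_of_pair_subset hV hm' hm hd.symm h6 hpm hp hpF
  have hmm' : m ∪ m' ⊆ V := union_subset (hV m hm) (hV m' hm')
  have := card_le_card (biUnion_avoiding_subset_sdiff (E := E) (s := m ∪ m') hV)
  rw [card_sdiff_of_subset hmm', card_union_of_disjoint hd, hE.card_eq_three m hm,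
    hE.card_eq_three m' hm'] at this
  have := card_le_card hmm'
  have := hE.card_avoiding_le_card_biUnion hm (subset_union_left (s₂ := m'))
  have := hE.card_heavy_le_four hm hm' hd hstar
  have := hE.card_heavy_le_four hm' hm hd.symm hstar'
  have := hE.card_le_card_heavy_add_card_heavy_add_card_avoiding hm hm' hd
  omega

end PCP2K3Free

/-- Pigeonhole: two of the three edges contain the same one of `p`, `q`, so they share two
vertices. -/
lemma not_pairwise_card_inter_lt_two_of_forall_pair_subset {E : Finset (Finset α)}
    {p q : Finset α} (hp : #p = 2) (hq : #q = 2) (hpq : ∀ e ∈ E, p ⊆ e ∨ q ⊆ e)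
    {x y z : Finset α} (hx : x ∈ E) (hy : y ∈ E) (hz : z ∈ E) (hxy : #(x ∩ y) < 2)
    (hyz : #(y ∩ z) < 2) (hxz : #(x ∩ z) < 2) : False := by
  have hr : ∀ r : Finset α, #r = 2 → ∀ a b, r ⊆ a → r ⊆ b → ¬ #(a ∩ b) < 2 :=
    fun r hr a b ha hb h => (hr ▸ card_le_card (subset_inter ha hb)).not_gt h
  rcases hpq x hx with h₁ | h₁ <;> rcases hpq y hy with h₂ | h₂ <;>
    rcases hpq z hz with h₃ | h₃
  all_goals first
    | exact hr _ hp _ _ h₁ h₂ hxy | exact hr _ hq _ _ h₁ h₂ hxy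
    | exact hr _ hp _ _ h₂ h₃ hyz | exact hr _ hq _ _ h₂ h₃ hyz
    | exact hr _ hp _ _ h₁ h₃ hxz | exact hr _ hq _ _ h₁ h₃ hxz

lemma pcp2K3Free_of_forall_pair_subset {E : Finset (Finset α)} {p q : Finset α}
    (hc : ∀ e ∈ E, #e = 3) (hp : #p = 2) (hq : #q = 2) (hpq : ∀ e ∈ E, p ⊆ e ∨ q ⊆ e) :
    PCP2K3Free E := by
  refine ⟨hc, ?_, ?_, ?_⟩
  · rintro ⟨x, hx, y, hy, z, hz, u, w, hxy, hyz, hxz⟩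
    exact not_pairwise_card_inter_lt_two_of_forall_pair_subset hp hq hpq hx hy hz
      (by simp [hxy]) (by simp [hyz]) (by simp [disjoint_iff_inter_eq_empty.mp hxz])
  · rintro ⟨x, hx, y, hy, z, hz, u, w, s, hxy, hyz, hxz, -⟩
    exact not_pairwise_card_inter_lt_two_of_forall_pair_subset hp hq hpq hx hy hz
      (by simp [hxy]) (by simp [hyz]) (by simp [hxz])
  · rintro ⟨x, hx, y, hy, z, hz, u, hxy, hzxy⟩
    obtain ⟨hzx, hzy⟩ := disjoint_union_right.mp hzxy
    exact not_pairwise_card_inter_lt_two_of_forall_pair_subset hp hq hpq hx hy hz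
      (by simp [hxy]) (by simp [disjoint_iff_inter_eq_empty.mp hzy.symm])
      (by simp [disjoint_iff_inter_eq_empty.mp hzx.symm])

lemma card_filter_subset_powersetCard_three {V p : Finset α} (hpV : p ⊆ V) (hp : #p = 2) :
    #{e ∈ V.powersetCard 3 | p ⊆ e} = #V - 2 := by
  have himage : {e ∈ V.powersetCard 3 | p ⊆ e} = (V \ p).image (insert · p) := by
    ext e
    simp only [mem_filter, mem_powersetCard, mem_image, mem_sdiff]
    constructor
    · rintro ⟨⟨heV, he⟩, hpe⟩
      obtain ⟨a, hap, rfl⟩ := exists_eq_insert_iff.mpr ⟨hpe, by omega⟩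
      exact ⟨a, ⟨heV (mem_insert_self a p), hap⟩, rfl⟩
    · rintro ⟨a, ⟨haV, hap⟩, rfl⟩
      exact ⟨⟨insert_subset haV hpV, by rw [card_insert_of_notMem hap, hp]⟩, subset_insert a p⟩
  rw [himage, card_image_of_injOn fun a ha b _ hab => (insert_inj (mem_sdiff.mp ha).2).mp hab,
    card_sdiff_of_subset hpV, hp]

namespace ThreeGraph

lemma mem_mk3_edges {V : Finset ℕ} {p : Finset ℕ → Prop} {e : Finset ℕ} :
    e ∈ (mk3 V p).edges ↔ e ⊆ V ∧ #e = 3 ∧ p e := by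
  simp only [mk3, mem_filter, mem_powersetCard, and_assoc]

lemma pathP_edges : pathP.edges = {{0, 1, 2}, {2, 3, 4}, {4, 5, 6}} := by
  ext e
  simp only [pathP, mem_mk3_edges, mem_insert, mem_singleton]
  exact ⟨fun h => h.2.2, by rintro (rfl | rfl | rfl) <;> decide⟩

lemma triC_edges : triC.edges = {{0, 1, 2}, {2, 3, 4}, {4, 5, 0}} := by
  ext e
  simp only [triC, mem_mk3_edges, mem_insert, mem_singleton]
  exact ⟨fun h => h.2.2, by rintro (rfl | rfl | rfl) <;> decide⟩

lemma p2K3_edges : p2K3.edges = {{0, 1, 2}, {2, 3, 4}, {5, 6, 7}} := by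
  ext e
  simp only [p2K3, mem_mk3_edges, mem_insert, mem_singleton]
  exact ⟨fun h => h.2.2, by rintro (rfl | rfl | rfl) <;> decide⟩

lemma matchM_edges : matchM.edges = {{0, 1, 2}, {3, 4, 5}} := by
  ext e
  simp only [matchM, mem_mk3_edges, mem_insert, mem_singleton]
  exact ⟨fun h => h.2.2, by rintro (rfl | rfl) <;> decide⟩

variable {F H : ThreeGraph}

lemma image_inter_image_of_injOn {f : ℕ → ℕ} (hf : Set.InjOn f F.verts) {a b : Finset ℕ}
    (ha : a ∈ F.edges) (hb : b ∈ F.edges) : a.image f ∩ b.image f = (a ∩ b).image f :=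
  (image_inter_of_injOn a b (hf.mono (Set.union_subset (coe_subset.mpr (F.sub a ha))
    (coe_subset.mpr (F.sub b hb))))).symm

/-- The card condition makes the images of two edges meet exactly in the image of their
intersection, which with injectivity on each edge gives injectivity on all of `F.verts`. -/
lemma hasCopy_of_image_mem_edges (f : ℕ → ℕ) (hV : F.verts ⊆ F.edges.biUnion id)
    (hE : ∀ a ∈ F.edges, a.image f ∈ H.edges)
    (hI : ∀ a ∈ F.edges, ∀ b ∈ F.edges, a ≠ b → #(a.image f ∩ b.image f) ≤ #(a ∩ b)) :
    HasCopy F H := by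
  have hinj : ∀ a ∈ F.edges, Set.InjOn f a := fun a ha =>
    card_image_iff.mp (by rw [H.card3 _ (hE a ha), F.card3 a ha])
  have hinter : ∀ a ∈ F.edges, ∀ b ∈ F.edges, a.image f ∩ b.image f ⊆ (a ∩ b).image f := by
    intro a ha b hb
    rcases eq_or_ne a b with rfl | hab
    · rw [inter_self, inter_self]
    refine (eq_of_subset_of_card_le (image_inter_subset f a b) ?_).symm.subset
    rw [card_image_of_injOn ((hinj a ha).mono (coe_subset.mpr inter_subset_left))]
    exact hI a ha b hb hab
  refine ⟨f, fun v hv w hw hvw => ?_, fun v hv => ?_, hE⟩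
  · obtain ⟨a, ha, hva⟩ := mem_biUnion.mp (hV hv)
    obtain ⟨b, hb, hwb⟩ := mem_biUnion.mp (hV hw)
    obtain ⟨u, hu, hfu⟩ := mem_image.mp (hinter a ha b hb
      (mem_inter.mpr ⟨mem_image_of_mem f hva, hvw ▸ mem_image_of_mem f hwb⟩))
    exact (hinj a ha (mem_inter.mp hu).1 hva hfu).symm.trans
      (hinj b hb (mem_inter.mp hu).2 hwb (hfu.trans hvw))
  · obtain ⟨a, ha, hva⟩ := mem_biUnion.mp (hV hv)
    exact H.sub _ (hE a ha) (mem_image_of_mem f hva)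

lemma hasCopy_pathP_iff : HasCopy pathP H ↔ ∃ x ∈ H.edges, ∃ y ∈ H.edges, ∃ z ∈ H.edges,
    ∃ u w, x ∩ y = {u} ∧ y ∩ z = {w} ∧ Disjoint x z := by
  have mem : ∀ a ∈ ({{0, 1, 2}, {2, 3, 4}, {4, 5, 6}} : Finset (Finset ℕ)), a ∈ pathP.edges :=
    fun a ha => pathP_edges ▸ ha
  constructor
  · rintro ⟨f, hf, -, hE⟩
    have hI := fun a ha b hb => image_inter_image_of_injOn hf (mem a ha) (mem b hb)
    refine ⟨_, hE _ (mem {0, 1, 2} (by simp)), _, hE _ (mem {2, 3, 4} (by simp)),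
      _, hE _ (mem {4, 5, 6} (by simp)), f 2, f 4, ?_, ?_, ?_⟩
    · rw [hI _ (by simp) _ (by simp)]; simp
    · rw [hI _ (by simp) _ (by simp)]; simp
    · rw [disjoint_iff_inter_eq_empty, hI _ (by simp) _ (by simp)]; simp
  · rintro ⟨x, hx, y, hy, z, hz, u, w, hxy, hyz, hxz⟩
    obtain ⟨hux, huy⟩ := mem_inter.mp (hxy ▸ mem_singleton_self u)
    obtain ⟨hwy, hwz⟩ := mem_inter.mp (hyz ▸ mem_singleton_self w)
    obtain ⟨x₁, hx₁, hx₁u⟩ := exists_mem_ne (by rw [H.card3 x hx]; omega) u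
    obtain ⟨x₂, hxe⟩ := exists_eq_triple_of_card_eq_three (H.card3 x hx) hx₁ hux hx₁u
    obtain ⟨t, hye⟩ := exists_eq_triple_of_card_eq_three (H.card3 y hy) huy hwy
      (fun h => disjoint_left.mp hxz hux (h ▸ hwz))
    obtain ⟨z₂, hz₂, hz₂w⟩ := exists_mem_ne (by rw [H.card3 z hz]; omega) w
    obtain ⟨z₁, hze⟩ := exists_eq_triple_of_card_eq_three (H.card3 z hz) hwz hz₂ (Ne.symm hz₂w)
    set f := fun i => [x₁, x₂, u, t, w, z₁, z₂].getD i 0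
    have hfx : ({0, 1, 2} : Finset ℕ).image f = x := by rw [hxe]; simp [f]
    have hfy : ({2, 3, 4} : Finset ℕ).image f = y := by rw [hye]; simp [f]
    have hfz : ({4, 5, 6} : Finset ℕ).image f = z := by rw [hze]; simp [f]
    refine hasCopy_of_image_mem_edges f (by rw [pathP_edges]; decide) ?_ ?_
    · simp [pathP_edges, hfx, hfy, hfz, hx, hy, hz]
    · simp only [pathP_edges, mem_insert, mem_singleton, forall_eq_or_imp, forall_eq,
        hfx, hfy, hfz]
      simp [inter_comm y x, inter_comm z y, inter_comm z x, hxy, hyz,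
        disjoint_iff_inter_eq_empty.mp hxz]

lemma hasCopy_triC_iff : HasCopy triC H ↔ ∃ x ∈ H.edges, ∃ y ∈ H.edges, ∃ z ∈ H.edges,
    ∃ u w s, x ∩ y = {u} ∧ y ∩ z = {w} ∧ x ∩ z = {s} ∧ u ≠ w := by
  have mem : ∀ a ∈ ({{0, 1, 2}, {2, 3, 4}, {4, 5, 0}} : Finset (Finset ℕ)), a ∈ triC.edges :=
    fun a ha => triC_edges ▸ ha
  constructor
  · rintro ⟨f, hf, -, hE⟩
    have hI := fun a ha b hb => image_inter_image_of_injOn hf (mem a ha) (mem b hb)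
    refine ⟨_, hE _ (mem {0, 1, 2} (by simp)), _, hE _ (mem {2, 3, 4} (by simp)),
      _, hE _ (mem {4, 5, 0} (by simp)), f 2, f 4, f 0, ?_, ?_, ?_, ?_⟩
    · rw [hI _ (by simp) _ (by simp)]; simp
    · rw [hI _ (by simp) _ (by simp)]; simp
    · rw [hI _ (by simp) _ (by simp)]; simp
    · exact fun h => by simpa using hf (by simp [triC, mk3]) (by simp [triC, mk3]) h
  · rintro ⟨x, hx, y, hy, z, hz, u, w, s, hxy, hyz, hxz, huw⟩
    obtain ⟨hux, huy⟩ := mem_inter.mp (hxy ▸ mem_singleton_self u)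
    obtain ⟨hwy, hwz⟩ := mem_inter.mp (hyz ▸ mem_singleton_self w)
    obtain ⟨hsx, hsz⟩ := mem_inter.mp (hxz ▸ mem_singleton_self s)
    have hsu : s ≠ u := by
      rintro rfl
      exact huw (mem_singleton.mp (hyz ▸ mem_inter.mpr ⟨huy, hsz⟩))
    have hws : w ≠ s := by
      rintro rfl
      exact huw (mem_singleton.mp (hxy ▸ mem_inter.mpr ⟨hsx, hwy⟩)).symm
    obtain ⟨x₁, hxe⟩ := exists_eq_triple_of_card_eq_three (H.card3 x hx) hsx hux hsu
    obtain ⟨y₁, hye⟩ := exists_eq_triple_of_card_eq_three (H.card3 y hy) huy hwy huw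
    obtain ⟨z₁, hze⟩ := exists_eq_triple_of_card_eq_three (H.card3 z hz) hwz hsz hws
    set f := fun i => [s, x₁, u, y₁, w, z₁].getD i 0
    have hfx : ({0, 1, 2} : Finset ℕ).image f = x := by rw [hxe]; simp [f]
    have hfy : ({2, 3, 4} : Finset ℕ).image f = y := by rw [hye]; simp [f]
    have hfz : ({4, 5, 0} : Finset ℕ).image f = z := by rw [hze]; simp [f]
    refine hasCopy_of_image_mem_edges f (by rw [triC_edges]; decide) ?_ ?_
    · simp [triC_edges, hfx, hfy, hfz, hx, hy, hz]
    · simp only [triC_edges, mem_insert, mem_singleton, forall_eq_or_imp, forall_eq,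
        hfx, hfy, hfz]
      simp [inter_comm y x, inter_comm z y, inter_comm z x, hxy, hyz, hxz]

lemma hasCopy_p2K3_iff : HasCopy p2K3 H ↔ ∃ x ∈ H.edges, ∃ y ∈ H.edges, ∃ z ∈ H.edges,
    ∃ u, x ∩ y = {u} ∧ Disjoint z (x ∪ y) := by
  have mem : ∀ a ∈ ({{0, 1, 2}, {2, 3, 4}, {5, 6, 7}} : Finset (Finset ℕ)), a ∈ p2K3.edges :=
    fun a ha => p2K3_edges ▸ ha
  constructor
  · rintro ⟨f, hf, -, hE⟩
    have hI := fun a ha b hb => image_inter_image_of_injOn hf (mem a ha) (mem b hb)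
    refine ⟨_, hE _ (mem {0, 1, 2} (by simp)), _, hE _ (mem {2, 3, 4} (by simp)),
      _, hE _ (mem {5, 6, 7} (by simp)), f 2, ?_, ?_⟩
    · rw [hI _ (by simp) _ (by simp)]; simp
    · rw [disjoint_union_right, disjoint_iff_inter_eq_empty, disjoint_iff_inter_eq_empty,
        hI _ (by simp) _ (by simp), hI _ (by simp) _ (by simp)]
      simp
  · rintro ⟨x, hx, y, hy, z, hz, u, hxy, hzxy⟩
    obtain ⟨hux, huy⟩ := mem_inter.mp (hxy ▸ mem_singleton_self u)
    obtain ⟨x₁, hx₁, hx₁u⟩ := exists_mem_ne (by rw [H.card3 x hx]; omega) u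
    obtain ⟨x₂, hxe⟩ := exists_eq_triple_of_card_eq_three (H.card3 x hx) hx₁ hux hx₁u
    obtain ⟨y₂, hy₂, hy₂u⟩ := exists_mem_ne (by rw [H.card3 y hy]; omega) u
    obtain ⟨y₁, hye⟩ := exists_eq_triple_of_card_eq_three (H.card3 y hy) huy hy₂ (Ne.symm hy₂u)
    obtain ⟨z₁, z₂, z₃, -, -, -, hze⟩ := card_eq_three.mp (H.card3 z hz)
    set f := fun i => [x₁, x₂, u, y₁, y₂, z₁, z₂, z₃].getD i 0
    have hfx : ({0, 1, 2} : Finset ℕ).image f = x := by rw [hxe]; simp [f]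
    have hfy : ({2, 3, 4} : Finset ℕ).image f = y := by rw [hye]; simp [f]
    have hfz : ({5, 6, 7} : Finset ℕ).image f = z := by rw [hze]; simp [f]
    obtain ⟨hzx, hzy⟩ := disjoint_union_right.mp hzxy
    refine hasCopy_of_image_mem_edges f (by rw [p2K3_edges]; decide) ?_ ?_
    · simp [p2K3_edges, hfx, hfy, hfz, hx, hy, hz]
    · simp only [p2K3_edges, mem_insert, mem_singleton, forall_eq_or_imp, forall_eq,
        hfx, hfy, hfz]
      simp [inter_comm y x, inter_comm x z, inter_comm y z, hxy,
        disjoint_iff_inter_eq_empty.mp hzx, disjoint_iff_inter_eq_empty.mp hzy]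

lemma hasCopy_matchM_iff : HasCopy matchM H ↔ ∃ x ∈ H.edges, ∃ y ∈ H.edges, Disjoint x y := by
  have mem : ∀ a ∈ ({{0, 1, 2}, {3, 4, 5}} : Finset (Finset ℕ)), a ∈ matchM.edges :=
    fun a ha => matchM_edges ▸ ha
  constructor
  · rintro ⟨f, hf, -, hE⟩
    refine ⟨_, hE _ (mem {0, 1, 2} (by simp)), _, hE _ (mem {3, 4, 5} (by simp)), ?_⟩
    rw [disjoint_iff_inter_eq_empty,
      image_inter_image_of_injOn hf (mem _ (by simp)) (mem _ (by simp))]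
    simp
  · rintro ⟨x, hx, y, hy, hxy⟩
    obtain ⟨x₁, x₂, x₃, -, -, -, hxe⟩ := card_eq_three.mp (H.card3 x hx)
    obtain ⟨y₁, y₂, y₃, -, -, -, hye⟩ := card_eq_three.mp (H.card3 y hy)
    set f := fun i => [x₁, x₂, x₃, y₁, y₂, y₃].getD i 0
    have hfx : ({0, 1, 2} : Finset ℕ).image f = x := by rw [hxe]; simp [f]
    have hfy : ({3, 4, 5} : Finset ℕ).image f = y := by rw [hye]; simp [f]
    refine hasCopy_of_image_mem_edges f (by rw [matchM_edges]; decide) ?_ ?_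
    · simp [matchM_edges, hfx, hfy, hx, hy]
    · simp only [matchM_edges, mem_insert, mem_singleton, forall_eq_or_imp, forall_eq, hfx, hfy]
      simp [inter_comm y x, disjoint_iff_inter_eq_empty.mp hxy]

theorem pcp2K3Free_edges_iff :
    PCP2K3Free H.edges ↔ ¬ HasCopy pathP H ∧ ¬ HasCopy triC H ∧ ¬ HasCopy p2K3 H := by
  rw [hasCopy_pathP_iff, hasCopy_triC_iff, hasCopy_p2K3_iff]
  exact ⟨fun h => ⟨h.not_path, h.not_triangle, h.not_p2K3⟩, fun h => ⟨H.card3, h.1, h.2.1, h.2.2⟩⟩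

noncomputable def twoPairStars (n : ℕ) : ThreeGraph :=
  mk3 (range n) fun e => {0, 1} ⊆ e ∨ {2, 3} ⊆ e

lemma pcp2K3Free_twoPairStars (n : ℕ) : PCP2K3Free (twoPairStars n).edges :=
  pcp2K3Free_of_forall_pair_subset (twoPairStars n).card3 (p := {0, 1}) (q := {2, 3}) rfl rfl
    fun _ he => (mem_mk3_edges.mp he).2.2

lemma hasCopy_matchM_twoPairStars {n : ℕ} (hn : 6 ≤ n) : HasCopy matchM (twoPairStars n) := by
  have hsub : ∀ e : Finset ℕ, (∀ v ∈ e, v ≤ 5) → e ⊆ range n := fun e he v hv =>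
    mem_range.mpr (by have := he v hv; omega)
  exact hasCopy_matchM_iff.mpr
    ⟨{0, 1, 4}, mem_mk3_edges.mpr ⟨hsub _ (by decide), by decide, Or.inl (by decide)⟩,
      {2, 3, 5}, mem_mk3_edges.mpr ⟨hsub _ (by decide), by decide, Or.inr (by decide)⟩, by decide⟩

lemma card_twoPairStars_edges {n : ℕ} (hn : 4 ≤ n) : #(twoPairStars n).edges = 2 * n - 4 := by
  have hedges : (twoPairStars n).edges = {e ∈ (range n).powersetCard 3 | {0, 1} ⊆ e} ∪
      {e ∈ (range n).powersetCard 3 | {2, 3} ⊆ e} := by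
    ext e
    simp only [twoPairStars, mem_mk3_edges, mem_union, mem_filter, mem_powersetCard]
    tauto
  have hdisj : Disjoint {e ∈ (range n).powersetCard 3 | {0, 1} ⊆ e}
      {e ∈ (range n).powersetCard 3 | {2, 3} ⊆ e} := by
    refine disjoint_filter.mpr fun e he h01 h23 => ?_
    have := card_le_card (union_subset h01 h23)
    rw [(mem_powersetCard.mp he).2] at this
    exact absurd this (by decide)
  have hsub : ∀ e : Finset ℕ, (∀ v ∈ e, v ≤ 3) → e ⊆ range n := fun e he v hv =>
    mem_range.mpr (by have := he v hv; omega)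
  rw [hedges, card_union_of_disjoint hdisj,
    card_filter_subset_powersetCard_three (hsub _ (by decide)) rfl,
    card_filter_subset_powersetCard_three (hsub _ (by decide)) rfl, card_range]
  omega

end ThreeGraph

/-- `ex(n;{P, C, P₂ ∪ K₃}|M) = 2n − 4` for every `n ≥ 6`. -/
theorem conditional_turan_PCP2K3_M (n : ℕ) (hn : 6 ≤ n) :
    (∀ H : ThreeGraph, H.verts.card = n → ¬ HasCopy pathP H → ¬ HasCopy triC H →
      ¬ HasCopy p2K3 H → HasCopy matchM H → H.edges.card ≤ 2 * n - 4) ∧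
    (∃ H : ThreeGraph, H.verts.card = n ∧ ¬ HasCopy pathP H ∧ ¬ HasCopy triC H ∧
      ¬ HasCopy p2K3 H ∧ HasCopy matchM H ∧ H.edges.card = 2 * n - 4) := by
  refine ⟨fun H hcard hP hC hK hM => ?_, ?_⟩
  · obtain ⟨m, hm, m', hm', hd⟩ := hasCopy_matchM_iff.mp hM
    have := (pcp2K3Free_edges_iff.mpr ⟨hP, hC, hK⟩).card_add_four_le H.sub hm hm' hd (hcard ▸ hn)
    omega
  · obtain ⟨hP, hC, hK⟩ := pcp2K3Free_edges_iff.mp (pcp2K3Free_twoPairStars n)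
    exact ⟨twoPairStars n, card_range n, hP, hC, hK, hasCopy_matchM_twoPairStars hn,
      card_twoPairStars_edges (by omega)⟩
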